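/- arXiv:2411.08546 — 2 statements merged into one kernel-verified Lean document; each statement's English description precedes it below -/
import Mathlib

section
/- Let d ≥ 2, n ≥ 2d + 2, d ≤ r ≤ n - d, and let F ⊆ 2^[n] be a 2d-union family with |F_{d+1}| ≥ r. Then |F| ≤ Σ_{i=0}^{d} C(n,i) - C(n-d, d) + n - d. -/
/-!
Induction on `n` and, for fixed `n`, on the weight `∑_{A ∈ F} ∑_{x ∈ A} 2^x`. UV-compressions
`A ↦ A - j + i` (`i < j`), and replacing a member of size `≥ d + 2` by an absent `(d+1)`-subset,
keep all hypotheses and lower the weight, so `F` may be taken shifted and pushed down.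

For `n = 2d + 1` no two members of `F` are complementary, so `|F| ≤ 2^(n-1) = 4^d`. Otherwise
write `n = m + 1` and split `F` into `F₀ = {A ∈ F : n ∉ A}`, bounded by induction on `n`, and the
link `F₁ = {A - n : n ∈ A ∈ F}`, which is `2(d-1)`-union because `F` is shifted. It remains to
show `|F₁| + C(m-d, d-1) ≤ ∑_{i<d} C(m, i) + 1`. For `d = 2`, `F₁` lies in the intersection of
two triples of `F₀`. If `F₁` has at least `d - 1` sets of size `d`, induction on `d` applies.
Otherwise pushing down leaves no set of size `> d` in `F₁`, and no `(d-1)`-set of `F₁` is disjoint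
from a `(d+1)`-set of `F₀`. If `b` is the largest point of the `(d+1)`-sets of `F₀`, shiftedness
puts every cone `[d] ∪ {x}`, `d < x ≤ b`, into `F₀`; these, with the complements in `[b]` of the
`(d+1)`-sets of `F₀` when `b < 2d`, are disjoint from at least `C(m-d, d-1)` sets of size `d - 1`,
and from more when `F₁` contains two `d`-sets `S`, each giving the cones `S ∪ {x}` in `F₀`.
-/

open Finset
open scoped FinsetFamily

namespace UnionFamily

def extremalBound (n d : ℕ) : ℕ :=
  (∑ i ∈ range (d + 1), n.choose i) - (n - d).choose d + (n - d)

lemma sum_range_choose_succ (n d : ℕ) :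
    ∑ i ∈ range (d + 1), (n + 1).choose i =
      ∑ i ∈ range (d + 1), n.choose i + ∑ i ∈ range d, n.choose i := by
  rw [sum_range_succ' (fun i => (n + 1).choose i), sum_range_succ' (fun i => n.choose i)]
  simp only [Nat.choose_succ_succ', Nat.choose_zero_right, sum_add_distrib]
  ring

lemma choose_le_sum_range_choose {n k d : ℕ} (hk : k < d) :
    n.choose k ≤ ∑ i ∈ range d, n.choose i :=
  single_le_sum (f := fun i => n.choose i) (fun _ _ => Nat.zero_le _) (mem_range.2 hk)

lemma le_choose_of_pos_of_lt {M k : ℕ} (hk : 1 ≤ k) (hkM : k < M) : M ≤ M.choose k := by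
  obtain ⟨m, rfl⟩ : ∃ m, M = m + 1 := ⟨M - 1, by omega⟩
  obtain ⟨j, rfl⟩ : ∃ j, k = j + 1 := ⟨k - 1, by omega⟩
  have hj : j + 1 ≤ m.choose j :=
    (Nat.choose_succ_self_right j).symm.le.trans (Nat.choose_le_choose j (by omega))
  refine Nat.le_of_mul_le_mul_right (c := j + 1) ?_ (by omega)
  rw [← Nat.add_one_mul_choose_eq]
  exact Nat.mul_le_mul_left _ hj

lemma extremalBound_two_mul_add_one (d : ℕ) : extremalBound (2 * d + 1) d = 4 ^ d := by
  have hd : d + 1 ≤ 4 ^ d :=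
    (Nat.lt_two_pow_self).trans_le (Nat.pow_le_pow_left (by norm_num) d)
  rw [extremalBound, Nat.sum_range_choose_halfway, show 2 * d + 1 - d = d + 1 by omega,
    Nat.choose_succ_self_right]
  omega

lemma extremalBound_succ {n d : ℕ} (hd : 1 ≤ d) (hdn : d ≤ n) :
    extremalBound (n + 1) d + (n - d).choose (d - 1) =
      extremalBound n d + ∑ i ∈ range d, n.choose i + 1 := by
  obtain ⟨k, rfl⟩ : ∃ k, d = k + 1 := ⟨d - 1, by omega⟩
  have hpascal : (n + 1 - (k + 1)).choose (k + 1) =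
      (n - (k + 1)).choose (k + 1) + (n - (k + 1)).choose k := by
    rw [show n + 1 - (k + 1) = n - (k + 1) + 1 by omega, Nat.choose_succ_succ']
    ring
  have h1 : (n - (k + 1)).choose (k + 1) ≤ ∑ i ∈ range (k + 1 + 1), n.choose i :=
    (Nat.choose_le_choose _ (by omega)).trans (choose_le_sum_range_choose (by omega))
  have h2 : (n - (k + 1)).choose k ≤ ∑ i ∈ range (k + 1), n.choose i :=
    (Nat.choose_le_choose _ (by omega)).trans (choose_le_sum_range_choose (by omega))
  rw [extremalBound, extremalBound, sum_range_choose_succ, hpascal, Nat.add_sub_cancel]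
  omega

lemma extremalBound_pred_add_choose_le {m d : ℕ} (hd : 3 ≤ d) (hm : 2 * d + 1 ≤ m) :
    extremalBound m (d - 1) + (m - d).choose (d - 1) ≤ ∑ i ∈ range d, m.choose i + 1 := by
  have hpascal : (m - (d - 1)).choose (d - 1) =
      (m - d).choose (d - 1) + (m - d).choose (d - 2) := by
    rw [show m - (d - 1) = m - d + 1 by omega, show d - 1 = d - 2 + 1 by omega,
      Nat.choose_succ_succ']
    ring
  have h1 : m - d ≤ (m - d).choose (d - 2) := le_choose_of_pos_of_lt (by omega) (by omega)
  have h2 : (m - (d - 1)).choose (d - 1) ≤ ∑ i ∈ range d, m.choose i :=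
    (Nat.choose_le_choose _ (by omega)).trans (choose_le_sum_range_choose (by omega))
  rw [extremalBound, show d - 1 + 1 = d by omega]
  omega

lemma choose_add_eq_sum_range (w R k : ℕ) :
    (w + R).choose k = ∑ t ∈ range (k + 1), w.choose t * R.choose (k - t) := by
  rw [Nat.add_choose_eq,
    Nat.sum_antidiagonal_eq_sum_range_succ fun i j => w.choose i * R.choose j]

lemma choose_add_le_sum_range_add_mul {w R d c : ℕ} (hw : 2 ≤ w) (hwd : w < d)
    (hR : d - w ≤ R) (hc : d ≤ c) :
    (w + R).choose (d - 1) ≤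
      ∑ t ∈ range (w - 1), w.choose t * R.choose (d - 1 - t) + c * R.choose (d - w) := by
  have htail : ∑ t ∈ range (d - 1 + 1), w.choose t * R.choose (d - 1 - t) =
      ∑ t ∈ range (w - 1 + 1 + 1), w.choose t * R.choose (d - 1 - t) := by
    refine (sum_subset (range_subset_range.2 (by omega)) fun t _ ht => ?_).symm
    rw [Nat.choose_eq_zero_of_lt (by simp at ht; omega), zero_mul]
  have hid := Nat.choose_succ_right_eq R (d - 1 - w)
  rw [show d - 1 - w + 1 = d - w by omega] at hid
  have htop : R.choose (d - 1 - w) ≤ (d - w) * R.choose (d - w) := by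
    calc R.choose (d - 1 - w) ≤ R.choose (d - 1 - w) * (R - (d - 1 - w)) :=
          Nat.le_mul_of_pos_right _ (by omega)
      _ = (d - w) * R.choose (d - w) := by rw [← hid, mul_comm]
  have hmul : d * R.choose (d - w) ≤ c * R.choose (d - w) := Nat.mul_le_mul_right _ hc
  have hsplit : d * R.choose (d - w) = w * R.choose (d - w) + (d - w) * R.choose (d - w) := by
    rw [← add_mul, Nat.add_sub_cancel' hwd.le]
  rw [choose_add_eq_sum_range, htail, sum_range_succ, sum_range_succ,
    show w - 1 + 1 = w by omega, Nat.choose_self,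
    Nat.choose_symm_of_eq_add (by omega : w = w - 1 + 1), Nat.choose_one_right,
    show d - 1 - (w - 1) = d - w by omega]
  linarith

section Families

variable {α : Type*} [DecidableEq α] {i j : α} {s : ℕ} {A : Finset α} {F : Finset (Finset α)}

def IsUnion (s : ℕ) (F : Finset (Finset α)) : Prop :=
  ∀ A ∈ F, ∀ B ∈ F, (A ∪ B).card ≤ s

lemma compress_singleton_of_mem (hj : j ∈ A) (hi : i ∉ A) :
    UV.compress {i} {j} A = insert i (A.erase j) := by
  have hij : i ≠ j := fun h => hi (h ▸ hj)
  rw [UV.compress_of_disjoint_of_le (by simpa using hi) (by simpa using hj), sup_eq_union,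
    union_comm, ← insert_eq, sdiff_singleton_eq_erase, erase_insert_of_ne hij]

lemma compress_singleton_of_not (h : ¬(j ∈ A ∧ i ∉ A)) : UV.compress {i} {j} A = A := by
  rw [UV.compress, if_neg]
  simpa [and_comm] using h

lemma mem_compression_singleton (hA : A ∈ 𝓒 {i} {j} F) :
    (A ∈ F ∧ UV.compress {i} {j} A ∈ F) ∨
      ∃ B ∈ F, j ∈ B ∧ i ∉ B ∧ A = insert i (B.erase j) := by
  obtain h | ⟨hAF, B, hB, rfl⟩ := UV.mem_compression.1 hA
  · exact Or.inl h
  · by_cases hc : j ∈ B ∧ i ∉ B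
    · exact Or.inr ⟨B, hB, hc.1, hc.2, compress_singleton_of_mem hc.1 hc.2⟩
    · rw [compress_singleton_of_not hc] at hAF
      exact absurd hB hAF

lemma insert_erase_mem_of_compression_eq (h : 𝓒 {i} {j} F = F) (hA : A ∈ F) (hj : j ∈ A)
    (hi : i ∉ A) : insert i (A.erase j) ∈ F := by
  simpa [h, compress_singleton_of_mem hj hi] using
    UV.compress_mem_compression (u := {i}) (v := {j}) hA

lemma subset_of_mem_compression {U : Finset α} (hi : i ∈ U) (hF : ∀ A ∈ F, A ⊆ U)
    (hA : A ∈ 𝓒 {i} {j} F) : A ⊆ U := by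
  obtain ⟨hAF, -⟩ | ⟨B, hB, -, -, rfl⟩ := mem_compression_singleton hA
  · exact hF A hAF
  · exact insert_subset hi ((erase_subset _ _).trans (hF B hB))

lemma card_insert_erase_le (i : α) {X : Finset α} (hj : j ∈ X) :
    (insert i (X.erase j)).card ≤ X.card :=
  (card_insert_le _ _).trans (by rw [card_erase_add_one hj])

lemma card_union_insert_erase_le (hun : IsUnion s F) (hA : A ∈ F)
    (hcA : UV.compress {i} {j} A ∈ F) {C : Finset α} (hC : C ∈ F) (hjC : j ∈ C) :
    (A ∪ insert i (C.erase j)).card ≤ s := by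
  by_cases hjA : j ∈ A
  · by_cases hiA : i ∈ A
    · refine (card_le_card fun x hx => ?_).trans (hun A hA C hC)
      simp only [mem_union, mem_insert, mem_erase] at hx ⊢
      grind
    · rw [compress_singleton_of_mem hjA hiA] at hcA
      have heq : A ∪ insert i (C.erase j) = insert i (A.erase j) ∪ C := by
        ext x
        simp only [mem_union, mem_insert, mem_erase]
        grind
      exact heq ▸ hun _ hcA C hC
  · have hsub : A ∪ insert i (C.erase j) ⊆ insert i ((A ∪ C).erase j) := by
      intro x hx
      simp only [mem_union, mem_insert, mem_erase] at hx ⊢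
      grind
    exact (card_le_card hsub).trans
      ((card_insert_erase_le i (mem_union_right A hjC)).trans (hun A hA C hC))

lemma IsUnion.compression (hun : IsUnion s F) : IsUnion s (𝓒 {i} {j} F) := by
  intro X hX Y hY
  obtain ⟨hXF, hcX⟩ | ⟨B, hB, hjB, -, rfl⟩ := mem_compression_singleton hX <;>
    obtain ⟨hYF, hcY⟩ | ⟨C, hC, hjC, -, rfl⟩ := mem_compression_singleton hY
  · exact hun X hXF Y hYF
  · exact card_union_insert_erase_le hun hXF hcX hC hjC
  · exact union_comm Y _ ▸ card_union_insert_erase_le hun hYF hcY hB hjB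
  · rw [insert_union, union_insert, insert_idem, ← erase_union_distrib]
    exact (card_insert_erase_le i (mem_union_left C hjB)).trans (hun B hB C hC)

lemma filter_card_compression (k : ℕ) :
    (𝓒 {i} {j} F).filter (·.card = k) = 𝓒 {i} {j} (F.filter (·.card = k)) := by
  have hcard : ∀ A : Finset α, (UV.compress {i} {j} A).card = A.card :=
    UV.card_compress (by simp)
  ext A
  simp only [mem_filter, UV.mem_compression, hcard]
  grind

lemma sum_compression_lt {β : Type*} [DecidableEq β] [GeneralizedBooleanAlgebra β]
    [DecidableRel (@Disjoint β _ _)] [DecidableLE β] {u v : β} {G : Finset β} (f : β → ℕ)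
    (hf : ∀ a, UV.compress u v a ≠ a → f (UV.compress u v a) < f a) (hne : 𝓒 u v G ≠ G) :
    ∑ a ∈ 𝓒 u v G, f a < ∑ a ∈ G, f a := by
  have hmoved : (G.filter fun a => UV.compress u v a ∉ G).Nonempty := by
    refine nonempty_iff_ne_empty.2 fun h => hne ?_
    have hG := filter_union_filter_not_eq (fun a => UV.compress u v a ∈ G) G
    rw [UV.compression, filter_image, h, image_empty, union_empty]
    rwa [h, union_empty] at hG
  rw [UV.compression, sum_union UV.compress_disjoint, filter_image, sum_image UV.compress_injOn,
    ← sum_filter_add_sum_filter_not G (fun a => UV.compress u v a ∈ G), add_lt_add_iff_left]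
  refine sum_lt_sum_of_nonempty hmoved fun a ha => hf a fun h => ?_
  obtain ⟨haG, hc⟩ := mem_filter.1 ha
  exact hc (h.symm ▸ haG)

lemma card_image_sdiff {U : Finset α} (hF : ∀ A ∈ F, A ⊆ U) :
    (F.image (U \ ·)).card = F.card :=
  card_image_of_injOn fun A hA B hB h => by
    rw [← Finset.sdiff_sdiff_eq_self (hF A hA), ← Finset.sdiff_sdiff_eq_self (hF B hB)]
    exact congrArg (U \ ·) h

lemma two_mul_card_le_of_isUnion {U : Finset α} (hF : ∀ A ∈ F, A ⊆ U) (hun : IsUnion s F)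
    (hs : s < U.card) : 2 * F.card ≤ 2 ^ U.card := by
  have hdisj : Disjoint F (F.image (U \ ·)) := disjoint_left.2 fun A hA hA' => by
    obtain ⟨B, hB, rfl⟩ := mem_image.1 hA'
    have := hun B hB _ hA
    rw [union_sdiff_of_subset (hF B hB)] at this
    omega
  have hsub : F ∪ F.image (U \ ·) ⊆ U.powerset :=
    union_subset (fun A hA => mem_powerset.2 (hF A hA)) fun _ h => by
      obtain ⟨B, -, rfl⟩ := mem_image.1 h
      exact mem_powerset.2 sdiff_subset
  calc 2 * F.card = (F ∪ F.image (U \ ·)).card := by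
        rw [card_union_of_disjoint hdisj, card_image_sdiff hF]; ring
    _ ≤ U.powerset.card := card_le_card hsub
    _ = 2 ^ U.card := card_powerset U

end Families

section NonTransversals

variable {α : Type*} [DecidableEq α]

def nonTransversals (k : ℕ) (U : Finset α) (G : Finset (Finset α)) : Finset (Finset α) :=
  (U.powersetCard k).filter fun S => ∃ B ∈ G, Disjoint S B

variable {k : ℕ} {U : Finset α} {G : Finset (Finset α)}

lemma powersetCard_sdiff_subset_nonTransversals {S₀ : Finset α}
    (hk : S₀.card + k < U.card) (hcone : ∀ x ∈ U \ S₀, insert x S₀ ∈ G) :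
    powersetCard k (U \ S₀) ⊆ nonTransversals k U G := by
  intro S hS
  obtain ⟨hSU, hScard⟩ := mem_powersetCard.1 hS
  have hdisj : Disjoint S S₀ := disjoint_left.2 fun x hxS => (mem_sdiff.1 (hSU hxS)).2
  obtain ⟨x, hxU, hx⟩ := exists_mem_notMem_of_card_lt_card
    ((card_union_le S S₀).trans_lt (by omega) : (S ∪ S₀).card < U.card)
  rw [mem_union, not_or] at hx
  exact mem_filter.2 ⟨mem_powersetCard.2 ⟨hSU.trans sdiff_subset, hScard⟩, insert x S₀,
    hcone x (mem_sdiff.2 ⟨hxU, hx.2⟩), disjoint_insert_right.2 ⟨hx.1, hdisj⟩⟩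

lemma choose_add_choose_le_card_nonTransversals {d : ℕ} {S₁ S₂ : Finset α} (hd : 2 ≤ d)
    (hU : 2 * d ≤ U.card) (h₁ : S₁ ⊆ U) (h₂ : S₂ ⊆ U) (hc₁ : S₁.card = d)
    (hc₂ : S₂.card = d) (hne : S₁ ≠ S₂) (hcone₁ : ∀ x ∈ U \ S₁, insert x S₁ ∈ G)
    (hcone₂ : ∀ x ∈ U \ S₂, insert x S₂ ∈ G) :
    (U.card - d).choose (d - 1) + (U.card - d - 1).choose (d - 2) ≤
      (nonTransversals (d - 1) U G).card := by
  set C₁ := powersetCard (d - 1) (U \ S₁)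
  set C₂ := powersetCard (d - 1) (U \ S₂)
  have hC₁ : C₁.card = (U.card - d).choose (d - 1) := by
    rw [card_powersetCard, card_sdiff_of_subset h₁, hc₁]
  have hC₂ : C₂.card = (U.card - d).choose (d - 1) := by
    rw [card_powersetCard, card_sdiff_of_subset h₂, hc₂]
  have hunion : d + 1 ≤ (S₁ ∪ S₂).card := by
    obtain ⟨x, hx₂, hx₁⟩ :=
      not_subset.1 fun h => hne (eq_of_subset_of_card_le h (by omega)).symm
    have := card_lt_card (ssubset_iff_of_subset subset_union_left |>.2
      ⟨x, mem_union_right _ hx₂, hx₁⟩)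
    omega
  have hinter : (C₁ ∩ C₂).card ≤ (U.card - d - 1).choose (d - 1) := by
    have hsub : C₁ ∩ C₂ ⊆ powersetCard (d - 1) (U \ (S₁ ∪ S₂)) := fun S hS => by
      simp only [C₁, C₂, mem_inter, mem_powersetCard, subset_sdiff,
        disjoint_union_right] at hS ⊢
      exact ⟨⟨hS.1.1.1, hS.1.1.2, hS.2.1.2⟩, hS.1.2⟩
    refine (card_le_card hsub).trans ?_
    rw [card_powersetCard, card_sdiff_of_subset (union_subset h₁ h₂)]
    exact Nat.choose_le_choose _ (by omega)
  have hpascal : (U.card - d).choose (d - 1) =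
      (U.card - d - 1).choose (d - 1) + (U.card - d - 1).choose (d - 2) := by
    rw [show U.card - d = U.card - d - 1 + 1 by omega, show d - 1 = d - 2 + 1 by omega,
      Nat.choose_succ_succ', Nat.add_sub_cancel]
    ring
  have hsub : C₁ ∪ C₂ ⊆ nonTransversals (d - 1) U G := union_subset
    (powersetCard_sdiff_subset_nonTransversals (by omega) hcone₁)
    (powersetCard_sdiff_subset_nonTransversals (by omega) hcone₂)
  have := card_union_add_card_inter C₁ C₂
  have := card_le_card hsub
  omega

lemma sum_choose_le_card_nonTransversals {W O : Finset α} (hWO : Disjoint W O) (hU : W ∪ O ⊆ U)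
    {𝒯 : Finset (Finset α)}
    (h𝒯 : ∀ T ∈ 𝒯, T ⊆ W ∧ T.card ≤ k ∧ ∃ B ∈ G, B ⊆ W ∧ Disjoint T B) :
    ∑ T ∈ 𝒯, O.card.choose (k - T.card) ≤ (nonTransversals k U G).card := by
  set extend := fun T : Finset α => (O.powersetCard (k - T.card)).image (T ∪ ·)
  have hdisjO : ∀ {T E}, T ⊆ W → E ⊆ O → Disjoint T E := fun hT hE => hWO.mono hT hE
  have hcard : ∀ T ∈ 𝒯, (extend T).card = O.card.choose (k - T.card) := fun T hT => by
    rw [card_image_of_injOn, card_powersetCard]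
    intro E₁ hE₁ E₂ hE₂ h
    rw [mem_coe, mem_powersetCard] at hE₁ hE₂
    rw [← union_sdiff_cancel_left (hdisjO (h𝒯 T hT).1 hE₁.1),
      ← union_sdiff_cancel_left (hdisjO (h𝒯 T hT).1 hE₂.1)]
    exact congrArg (· \ T) h
  have htrace : ∀ {T E}, T ⊆ W → E ⊆ O → (T ∪ E) ∩ W = T := fun hT hE => by
    rw [union_inter_distrib_right, inter_eq_left.2 hT,
      disjoint_iff_inter_eq_empty.1 (hWO.mono_right hE).symm, union_empty]
  have hdisj : (𝒯 : Set (Finset α)).PairwiseDisjoint extend := by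
    intro T hT T' hT' hne
    refine disjoint_left.2 fun S hS hS' => hne ?_
    obtain ⟨E, hE, rfl⟩ := mem_image.1 hS
    obtain ⟨E', hE', hEE'⟩ := mem_image.1 hS'
    rw [← htrace (h𝒯 T hT).1 (mem_powersetCard.1 hE).1,
      ← htrace (h𝒯 T' hT').1 (mem_powersetCard.1 hE').1, hEE']
  have hsub : 𝒯.biUnion extend ⊆ nonTransversals k U G := fun S hS => by
    obtain ⟨T, hT, hS⟩ := mem_biUnion.1 hS
    obtain ⟨E, hE, rfl⟩ := mem_image.1 hS
    obtain ⟨hEO, hEcard⟩ := mem_powersetCard.1 hE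
    obtain ⟨hTW, hTk, B, hBG, hBW, hTB⟩ := h𝒯 T hT
    refine mem_filter.2 ⟨mem_powersetCard.2 ⟨(union_subset_union hTW hEO).trans hU, ?_⟩,
      B, hBG, disjoint_union_left.2 ⟨hTB, (hWO.mono hBW hEO).symm⟩⟩
    rw [card_union_of_disjoint (hdisjO hTW hEO), hEcard]
    omega
  calc ∑ T ∈ 𝒯, O.card.choose (k - T.card) = ∑ T ∈ 𝒯, (extend T).card :=
        (sum_congr rfl hcard).symm
    _ = (𝒯.biUnion extend).card := (card_biUnion hdisj).symm
    _ ≤ _ := card_le_card hsub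

lemma sum_biUnion_powersetCard (X : Finset α) (t₀ : ℕ) (f : ℕ → ℕ) :
    ∑ T ∈ (range t₀).biUnion (powersetCard · X), f T.card =
      ∑ t ∈ range t₀, X.card.choose t * f t := by
  rw [sum_biUnion (X.pairwise_disjoint_powersetCard.set_pairwise _)]
  refine sum_congr rfl fun t _ => ?_
  rw [sum_congr rfl fun T hT => by rw [(mem_powersetCard.1 hT).2], sum_const, card_powersetCard,
    smul_eq_mul]

end NonTransversals

section Shifting

variable {n i j : ℕ} {A A' : Finset ℕ} {F : Finset (Finset ℕ)}

def IsShifted (F : Finset (Finset ℕ)) : Prop :=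
  ∀ A ∈ F, ∀ ⦃i j : ℕ⦄, 1 ≤ i → i < j → j ∈ A → i ∉ A →
    insert i (A.erase j) ∈ F

def IsPushedDown (d : ℕ) (F : Finset (Finset ℕ)) : Prop :=
  ∀ A ∈ F, d + 2 ≤ A.card → ∀ A' ⊆ A, A'.card = d + 1 → A' ∈ F

def weight (F : Finset (Finset ℕ)) : ℕ :=
  ∑ A ∈ F, ∑ x ∈ A, 2 ^ x

lemma sum_two_pow_compress_lt (hij : i < j) (h : UV.compress {i} {j} A ≠ A) :
    ∑ x ∈ UV.compress {i} {j} A, 2 ^ x < ∑ x ∈ A, 2 ^ x := by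
  by_cases hc : j ∈ A ∧ i ∉ A
  · rw [compress_singleton_of_mem hc.1 hc.2, sum_insert fun h => hc.2 (mem_of_mem_erase h),
      ← sum_erase_add _ _ hc.1]
    have := Nat.pow_lt_pow_right (by norm_num : 1 < 2) hij
    omega
  · exact absurd (compress_singleton_of_not hc) h

lemma weight_compression_lt (hij : i < j) (hne : 𝓒 {i} {j} F ≠ F) :
    weight (𝓒 {i} {j} F) < weight F :=
  sum_compression_lt _ (fun _ => sum_two_pow_compress_lt hij) hne

lemma weight_insert_erase_lt (hA : A ∈ F) (hA' : A' ⊂ A) (hA'F : A' ∉ F) :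
    weight (insert A' (F.erase A)) < weight F := by
  have hlt : ∑ x ∈ A', 2 ^ x < ∑ x ∈ A, 2 ^ x := by
    obtain ⟨x, hxA, hxA'⟩ := exists_of_ssubset hA'
    exact sum_lt_sum_of_subset hA'.subset hxA hxA' (by positivity) fun _ _ _ => by positivity
  rw [weight, weight, sum_insert fun h => hA'F (mem_of_mem_erase h), ← sum_erase_add _ _ hA]
  omega

lemma isShifted_of_compression_eq (hF : ∀ A ∈ F, A ⊆ Icc 1 n)
    (h : ∀ i j, 1 ≤ i → i < j → j ≤ n → 𝓒 {i} {j} F = F) : IsShifted F :=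
  fun A hA i j hi hij hjA hiA => insert_erase_mem_of_compression_eq
    (h i j hi hij (mem_Icc.1 (hF A hA hjA)).2) hA hjA hiA

lemma card_insert_erase_of_mem (hjA : j ∈ A) (hiA : i ∉ A) :
    (insert i (A.erase j)).card = A.card := by
  rw [card_insert_of_notMem fun h => hiA (mem_of_mem_erase h), card_erase_add_one hjA]

lemma IsShifted.filter_card (hF : IsShifted F) (k : ℕ) : IsShifted (F.filter (·.card = k)) :=
  fun A hA _ _ hi hij hjA hiA => by
    obtain ⟨hAF, rfl⟩ := mem_filter.1 hA
    exact mem_filter.2 ⟨hF A hAF hi hij hjA hiA, card_insert_erase_of_mem hjA hiA⟩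

lemma IsShifted.nonMemberSubfamily (hF : IsShifted F) (hF' : ∀ A ∈ F, A ⊆ Icc 1 n) :
    IsShifted (F.nonMemberSubfamily n) := fun A hA i j hi hij hjA hiA => by
  obtain ⟨hAF, hnA⟩ := mem_nonMemberSubfamily.1 hA
  have hjn := (mem_Icc.1 (hF' A hAF hjA)).2
  refine mem_nonMemberSubfamily.2 ⟨hF A hAF hi hij hjA hiA, ?_⟩
  simp only [mem_insert, mem_erase, not_or, not_and]
  exact ⟨by omega, fun _ => hnA⟩

lemma IsUnion.insert_erase {s : ℕ} (hun : IsUnion s F) (hA : A ∈ F) (hA' : A' ⊆ A) :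
    IsUnion s (insert A' (F.erase A)) := by
  have hA's : ∀ B ∈ F, (A' ∪ B).card ≤ s := fun B hB =>
    (card_le_card (union_subset_union_left hA')).trans (hun A hA B hB)
  intro X hX Y hY
  rcases mem_insert.1 hX with hXA | hX <;> rcases mem_insert.1 hY with hYA | hY
  · rw [hXA, hYA, union_self]
    exact (card_le_card hA').trans (by simpa using hun A hA A hA)
  · exact hXA ▸ hA's Y (mem_of_mem_erase hY)
  · exact hYA ▸ union_comm A' X ▸ hA's X (mem_of_mem_erase hX)
  · exact hun X (mem_of_mem_erase hX) Y (mem_of_mem_erase hY)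

end Shifting

section ShiftedUniform

variable {N d b : ℕ} {G : Finset (Finset ℕ)}

lemma insert_Icc_mem_of_isShifted (hG : IsShifted G) (hbd : d < b) :
    ∀ {B : Finset ℕ}, B ∈ G → B ⊆ Icc 1 b → b ∈ B → B.card = d + 1 →
      insert b (Icc 1 d) ∈ G := by
  intro B
  induction hsum : ∑ x ∈ B, x using Nat.strong_induction_on generalizing B with
  | _ s ih =>
  intro hBG hBb hbB hcard
  by_cases heq : B.erase b = Icc 1 d
  · rwa [← heq, insert_erase hbB]
  have hcard' : (B.erase b).card = (Icc 1 d).card := by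
    rw [card_erase_of_mem hbB, Nat.card_Icc]; omega
  -- move a point `y ∉ Icc 1 d` of `B.erase b` down to a gap `x ∈ Icc 1 d`; `∑ B` decreases
  obtain ⟨y, hyB, hyI⟩ := not_subset.1 fun h => heq (eq_of_subset_of_card_le h hcard'.ge)
  obtain ⟨x, hxI, hxB⟩ := not_subset.1 fun h => heq (eq_of_subset_of_card_le h hcard'.le).symm
  obtain ⟨hyb, hy⟩ := mem_erase.1 hyB
  have hx := mem_Icc.1 hxI
  have hxB' : x ∉ B := fun h => hxB (mem_erase.2 ⟨by omega, h⟩)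
  have hdy : d < y := by have := mem_Icc.1 (hBb hy); simp at hyI; omega
  have hsum' : ∑ z ∈ insert x (B.erase y), z < s := by
    rw [sum_insert fun h => hxB' (mem_of_mem_erase h), ← hsum, ← sum_erase_add _ _ hy]
    omega
  refine ih _ hsum' rfl (hG B hBG hx.1 (by omega) hy hxB') (insert_subset (by simp; omega)
    ((erase_subset _ _).trans hBb)) (mem_insert_of_mem (mem_erase.2 ⟨Ne.symm hyb, hbB⟩)) ?_
  rw [card_insert_erase_of_mem hy hxB', hcard]

lemma exists_cone_of_isShifted (hshift : IsShifted G) (hG : ∀ B ∈ G, B ⊆ Icc 1 N)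
    (hcard : ∀ B ∈ G, B.card = d + 1) (hG2 : 2 ≤ G.card) :
    ∃ b, d + 2 ≤ b ∧ b ≤ N ∧ (∀ B ∈ G, B ⊆ Icc 1 b) ∧
      ∀ x ∈ Icc (d + 1) b, insert x (Icc 1 d) ∈ G := by
  obtain ⟨B₀, hB₀⟩ : G.Nonempty := card_pos.1 (by omega)
  have hsup : (G.sup id).Nonempty :=
    (card_pos.1 (show 0 < B₀.card by rw [hcard B₀ hB₀]; omega)).mono (le_sup (f := id) hB₀)
  set b := (G.sup id).max' hsup
  obtain ⟨B, hBG, hbB⟩ := mem_sup.1 (max'_mem _ hsup)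
  have hGb : ∀ B ∈ G, B ⊆ Icc 1 b := fun B hB x hx =>
    mem_Icc.2 ⟨(mem_Icc.1 (hG B hB hx)).1, le_max' _ x (mem_sup.2 ⟨B, hB, hx⟩)⟩
  have hb : d + 2 ≤ b := by
    by_contra! hb
    have hGsub : G ⊆ {Icc 1 (d + 1)} := fun B hB => mem_singleton.2 <|
      eq_of_subset_of_card_le ((hGb B hB).trans (Icc_subset_Icc_right (by omega)))
        (by rw [hcard B hB, Nat.card_Icc]; omega)
    have := card_le_card hGsub
    rw [card_singleton] at this
    omega
  have hmax : insert b (Icc 1 d) ∈ G :=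
    insert_Icc_mem_of_isShifted hshift (by omega) hBG (hGb B hBG) hbB (hcard B hBG)
  refine ⟨b, hb, (mem_Icc.1 (hG B hBG hbB)).2, hGb, fun x hx => ?_⟩
  obtain ⟨hdx, hxb⟩ := mem_Icc.1 hx
  rcases hxb.eq_or_lt with rfl | hxb
  · exact hmax
  · have := hshift _ hmax (by omega) hxb (mem_insert_self _ _) (by simp; omega)
    rwa [erase_insert (by simp; omega)] at this

lemma exists_disjoint_of_mem_biUnion_powersetCard {t₀ : ℕ} (ht₀ : t₀ ≤ b - d)
    (hcone : ∀ x ∈ Icc (d + 1) b, insert x (Icc 1 d) ∈ G) {T : Finset ℕ}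
    (hT : T ∈ (range t₀).biUnion (powersetCard · (Icc (d + 1) b))) :
    T ⊆ Icc 1 b ∧ T.card < t₀ ∧ ∃ B ∈ G, B ⊆ Icc 1 b ∧ Disjoint T B := by
  obtain ⟨t, ht, hT⟩ := mem_biUnion.1 hT
  obtain ⟨hTW, rfl⟩ := mem_powersetCard.1 hT
  have ht := mem_range.1 ht
  obtain ⟨x, hx, hxT⟩ := exists_mem_notMem_of_card_lt_card (s := T) (t := Icc (d + 1) b)
    (by rw [Nat.card_Icc]; omega)
  have hxb := mem_Icc.1 hx
  refine ⟨hTW.trans (Icc_subset_Icc_left (by omega)), ht, _, hcone x hx,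
    insert_subset (mem_Icc.2 ⟨by omega, hxb.2⟩) (Icc_subset_Icc_right (by omega)),
    disjoint_insert_right.2 ⟨hxT, disjoint_left.2 fun y hy hy' => ?_⟩⟩
  have := mem_Icc.1 (hTW hy)
  have := mem_Icc.1 hy'
  omega

lemma choose_le_card_nonTransversals (hd : 2 ≤ d) (hN : 2 * d + 1 ≤ N) (hshift : IsShifted G)
    (hG : ∀ B ∈ G, B ⊆ Icc 1 N) (hcard : ∀ B ∈ G, B.card = d + 1) (hGd : d ≤ G.card) :
    (N - d).choose (d - 1) ≤ (nonTransversals (d - 1) (Icc 1 N) G).card := by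
  obtain ⟨b, hb, hbN, hGb, hcone⟩ := exists_cone_of_isShifted hshift hG hcard (by omega)
  have hWO : Disjoint (Icc 1 b) (Icc (b + 1) N) :=
    disjoint_left.2 fun x hx hx' => by simp at hx hx'; omega
  have hU : Icc 1 b ∪ Icc (b + 1) N ⊆ Icc 1 N :=
    union_subset (Icc_subset_Icc_right hbN) (Icc_subset_Icc_left (by omega))
  have hO : (Icc (b + 1) N).card = N - b := by rw [Nat.card_Icc]; omega
  have hsum : ∀ t₀, ∑ T ∈ (range t₀).biUnion (powersetCard · (Icc (d + 1) b)),
      (N - b).choose (d - 1 - T.card) =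
        ∑ t ∈ range t₀, (b - d).choose t * (N - b).choose (d - 1 - t) :=
    fun t₀ => by
      rw [sum_biUnion_powersetCard _ t₀ fun t => (N - b).choose (d - 1 - t), Nat.card_Icc,
        show b + 1 - (d + 1) = b - d by omega]
  rw [show N - d = (b - d) + (N - b) by omega]
  rcases le_or_gt (2 * d) b with hwide | hnarrow
  · have h := sum_choose_le_card_nonTransversals (k := d - 1) hWO hU fun T hT =>
      have h := exists_disjoint_of_mem_biUnion_powersetCard (t₀ := d) (by omega) hcone hT
      ⟨h.1, by omega, h.2.2⟩
    have hv := choose_add_eq_sum_range (b - d) (N - b) (d - 1)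
    rw [Nat.sub_add_cancel (by omega : 1 ≤ d)] at hv
    rwa [hO, hsum, ← hv] at h
  -- for a narrow window the traces `Icc 1 b \ B`, `B ∈ G`, make up for the missing top layers
  have hcompl : ∀ T ∈ G.image (Icc 1 b \ ·), T ⊆ Icc 1 b ∧ T.card = b - d - 1 ∧
      ∃ B ∈ G, B ⊆ Icc 1 b ∧ Disjoint T B := fun T hT => by
    obtain ⟨B, hB, rfl⟩ := mem_image.1 hT
    refine ⟨sdiff_subset, ?_, B, hB, hGb B hB, sdiff_disjoint⟩
    rw [card_sdiff_of_subset (hGb B hB), Nat.card_Icc, hcard B hB]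
    omega
  have hdisj : Disjoint ((range (b - d - 1)).biUnion (powersetCard · (Icc (d + 1) b)))
      (G.image (Icc 1 b \ ·)) := disjoint_left.2 fun T hT hT' => by
    have := (exists_disjoint_of_mem_biUnion_powersetCard (by omega) hcone hT).2.1
    have := (hcompl T hT').2.1
    omega
  have h := sum_choose_le_card_nonTransversals (k := d - 1) hWO hU (𝒯 := _ ∪ _) fun T hT => by
    rcases mem_union.1 hT with hT | hT
    · have h := exists_disjoint_of_mem_biUnion_powersetCard (t₀ := b - d - 1) (by omega) hcone hT
      exact ⟨h.1, by omega, h.2.2⟩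
    · have h := hcompl T hT
      exact ⟨h.1, by omega, h.2.2⟩
  have hcompl_sum : ∑ T ∈ G.image (Icc 1 b \ ·), (N - b).choose (d - 1 - T.card) =
      G.card * (N - b).choose (d - (b - d)) := by
    rw [sum_congr rfl fun T hT => by
      rw [(hcompl T hT).2.1, show d - 1 - (b - d - 1) = d - (b - d) by omega],
      sum_const, card_image_sdiff hGb, smul_eq_mul]
  rw [hO, sum_union hdisj, hsum, hcompl_sum] at h
  exact (choose_add_le_sum_range_add_mul (by omega) (by omega) (by omega) hGd).trans h

end ShiftedUniform

structure Admissible (n d : ℕ) (F : Finset (Finset ℕ)) : Prop where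
  subset_Icc : ∀ A ∈ F, A ⊆ Icc 1 n
  isUnion : IsUnion (2 * d) F
  le_card_filter : d ≤ (F.filter (·.card = d + 1)).card

namespace Admissible

variable {n d i j : ℕ} {A A' : Finset ℕ} {F : Finset (Finset ℕ)}

lemma compression (hF : Admissible n d F) (hi : 1 ≤ i) (hij : i < j) (hjn : j ≤ n) :
    Admissible n d (𝓒 {i} {j} F) where
  subset_Icc _ hA := subset_of_mem_compression (mem_Icc.2 ⟨hi, by omega⟩) hF.subset_Icc hA
  isUnion := hF.isUnion.compression
  le_card_filter := by
    rw [filter_card_compression, UV.card_compression]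
    exact hF.le_card_filter

lemma insert_erase (hF : Admissible n d F) (hA : A ∈ F) (hAcard : d + 2 ≤ A.card)
    (hA'A : A' ⊆ A) (hA' : A'.card = d + 1) : Admissible n d (insert A' (F.erase A)) where
  subset_Icc X hX := by
    rcases mem_insert.1 hX with rfl | hX
    · exact hA'A.trans (hF.subset_Icc A hA)
    · exact hF.subset_Icc X (mem_of_mem_erase hX)
  isUnion := hF.isUnion.insert_erase hA hA'A
  le_card_filter := hF.le_card_filter.trans <| card_le_card fun X hX => by
    obtain ⟨hXF, hX⟩ := mem_filter.1 hX
    exact mem_filter.2 ⟨mem_insert_of_mem (mem_erase.2 ⟨by rintro rfl; omega, hXF⟩), hX⟩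

lemma card_le_of_eq_two_mul_add_one (hF : Admissible (2 * d + 1) d F) :
    F.card ≤ extremalBound (2 * d + 1) d := by
  have h := two_mul_card_le_of_isUnion hF.subset_Icc hF.isUnion
    (by rw [Nat.card_Icc]; omega)
  rw [Nat.card_Icc, Nat.add_sub_cancel, pow_succ, pow_mul] at h
  rw [extremalBound_two_mul_add_one]
  norm_num at h
  omega

end Admissible

section Link

variable {m d : ℕ} {X : Finset ℕ} {F : Finset (Finset ℕ)}

lemma subset_Icc_of_subset_of_notMem {A : Finset ℕ} (hA : A ⊆ Icc 1 (m + 1))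
    (hmA : m + 1 ∉ A) : A ⊆ Icc 1 m := fun x hx => by
  have := mem_Icc.1 (hA hx)
  have : x ≠ m + 1 := fun h => hmA (h ▸ hx)
  exact mem_Icc.2 ⟨by omega, by omega⟩

lemma subset_Icc_of_mem_nonMemberSubfamily (hF : ∀ A ∈ F, A ⊆ Icc 1 (m + 1))
    (hX : X ∈ F.nonMemberSubfamily (m + 1)) : X ⊆ Icc 1 m :=
  have h := mem_nonMemberSubfamily.1 hX
  subset_Icc_of_subset_of_notMem (hF X h.1) h.2

lemma subset_Icc_of_mem_memberSubfamily (hF : ∀ A ∈ F, A ⊆ Icc 1 (m + 1))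
    (hX : X ∈ F.memberSubfamily (m + 1)) : X ⊆ Icc 1 m :=
  have h := mem_memberSubfamily.1 hX
  subset_Icc_of_subset_of_notMem ((subset_insert _ _).trans (hF _ h.1)) h.2

lemma insert_mem_nonMemberSubfamily (hshift : IsShifted F)
    (hX : X ∈ F.memberSubfamily (m + 1)) {x : ℕ} (hx : x ∈ Icc 1 m) (hxX : x ∉ X) :
    insert x X ∈ F.nonMemberSubfamily (m + 1) := by
  obtain ⟨hXF, hmX⟩ := mem_memberSubfamily.1 hX
  have hx := mem_Icc.1 hx
  have h := hshift _ hXF hx.1 (Nat.lt_succ_of_le hx.2) (mem_insert_self _ _)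
    (by simp [hxX]; omega)
  rw [erase_insert hmX] at h
  exact mem_nonMemberSubfamily.2 ⟨h, by simp [hmX]; omega⟩

lemma le_card_filter_nonMemberSubfamily (hshift : IsShifted F)
    (hF : ∀ A ∈ F, A ⊆ Icc 1 (m + 1)) (hm : 2 * d ≤ m)
    (hcount : d ≤ (F.filter (·.card = d + 1)).card) :
    d ≤ ((F.nonMemberSubfamily (m + 1)).filter (·.card = d + 1)).card := by
  by_cases h : ∃ X ∈ F.memberSubfamily (m + 1), X.card = d
  · obtain ⟨X, hX, hXd⟩ := h
    have hXm := subset_Icc_of_mem_memberSubfamily hF hX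
    calc d ≤ (Icc 1 m \ X).card := by rw [card_sdiff_of_subset hXm, Nat.card_Icc]; omega
      _ ≤ _ := card_le_card_of_injOn (insert · X) (fun x hx => by
          obtain ⟨hx, hxX⟩ := mem_sdiff.1 hx
          exact mem_filter.2 ⟨insert_mem_nonMemberSubfamily hshift hX hx hxX,
            by rw [card_insert_of_notMem hxX, hXd]⟩)
          fun x hx y hy hxy => (insert_inj (mem_sdiff.1 hx).2).1 hxy
  · refine hcount.trans (card_le_card fun B hB => ?_)
    obtain ⟨hBF, hBd⟩ := mem_filter.1 hB
    refine mem_filter.2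
      ⟨mem_nonMemberSubfamily.2 ⟨hBF, fun hmB => h ⟨B.erase (m + 1), ?_, ?_⟩⟩, hBd⟩
    · exact mem_memberSubfamily.2 ⟨by rwa [insert_erase hmB], notMem_erase _ _⟩
    · rw [card_erase_of_mem hmB, hBd, Nat.add_sub_cancel]

lemma isUnion_memberSubfamily (hshift : IsShifted F) (hun : IsUnion (2 * d) F) (hm : 2 * d ≤ m) :
    IsUnion (2 * (d - 1)) (F.memberSubfamily (m + 1)) := by
  intro X hX Y hY
  obtain ⟨hXF, hmX⟩ := mem_memberSubfamily.1 hX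
  obtain ⟨hYF, hmY⟩ := mem_memberSubfamily.1 hY
  have hmXY : m + 1 ∉ X ∪ Y := by simp [hmX, hmY]
  have hXY := hun _ hXF _ hYF
  rw [insert_union, union_insert, insert_idem, card_insert_of_notMem hmXY] at hXY
  by_contra! hbig
  -- shifting `m + 1` to a point of `[m]` outside `X ∪ Y` makes the union too large
  obtain ⟨x, hx, hxXY⟩ := exists_mem_notMem_of_card_lt_card (s := X ∪ Y) (t := Icc 1 m)
    (by rw [Nat.card_Icc]; omega)
  have hxX : x ∉ X := fun h => hxXY (mem_union_left _ h)
  have hxF := (mem_nonMemberSubfamily.1 (insert_mem_nonMemberSubfamily hshift hX hx hxX)).1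
  have h := hun _ hxF _ hYF
  have hxm : x ∉ insert (m + 1) (X ∪ Y) := by
    rw [mem_insert, not_or]
    exact ⟨by have := (mem_Icc.1 hx).2; omega, hxXY⟩
  rw [insert_union, union_insert, card_insert_of_notMem hxm, card_insert_of_notMem hmXY] at h
  omega

lemma le_card_filter_memberSubfamily_of_isPushedDown (hpush : IsPushedDown d F)
    (hX : X ∈ F.memberSubfamily (m + 1)) (hXd : d + 1 ≤ X.card) :
    d + 1 ≤ ((F.memberSubfamily (m + 1)).filter (·.card = d)).card := by
  obtain ⟨hXF, hmX⟩ := mem_memberSubfamily.1 hX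
  have hsub : powersetCard d X ⊆ (F.memberSubfamily (m + 1)).filter (·.card = d) := by
    intro S hS
    obtain ⟨hSX, hSd⟩ := mem_powersetCard.1 hS
    have hmS : m + 1 ∉ S := fun h => hmX (hSX h)
    refine mem_filter.2
      ⟨mem_memberSubfamily.2 ⟨hpush _ hXF ?_ _ (insert_subset_insert _ hSX) ?_, hmS⟩, hSd⟩
    · rw [card_insert_of_notMem hmX]; omega
    · rw [card_insert_of_notMem hmS, hSd]
  calc d + 1 = (d + 1).choose d := (Nat.choose_succ_self_right d).symm
    _ ≤ X.card.choose d := Nat.choose_le_choose d hXd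
    _ = (powersetCard d X).card := (card_powersetCard d X).symm
    _ ≤ _ := card_le_card hsub

lemma disjoint_memberSubfamily_nonTransversals (hun : IsUnion (2 * d) F) (hd : 1 ≤ d)
    (U : Finset ℕ) :
    Disjoint (F.memberSubfamily (m + 1))
      (nonTransversals (d - 1) U ((F.nonMemberSubfamily (m + 1)).filter (·.card = d + 1))) := by
  refine disjoint_left.2 fun S hS hS' => ?_
  obtain ⟨hSF, hmS⟩ := mem_memberSubfamily.1 hS
  obtain ⟨hSU, B, hB, hSB⟩ := mem_filter.1 hS'
  obtain ⟨hB, hBd⟩ := mem_filter.1 hB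
  obtain ⟨hBF, hmB⟩ := mem_nonMemberSubfamily.1 hB
  have h := hun _ hSF _ hBF
  rw [insert_union, card_insert_of_notMem (by simp [hmS, hmB]), card_union_of_disjoint hSB,
    (mem_powersetCard.1 hSU).2, hBd] at h
  omega

lemma card_memberSubfamily_le_four (hun : IsUnion 4 F)
    (hG : 2 ≤ ((F.nonMemberSubfamily (m + 1)).filter (·.card = 3)).card) :
    (F.memberSubfamily (m + 1)).card ≤ 4 := by
  obtain ⟨B₁, hB₁, B₂, hB₂, hne⟩ := one_lt_card.1 (one_lt_two.trans_le hG)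
  -- `|insert (m + 1) X ∪ B| ≤ 4` forces `|X ∪ B| ≤ 3 = |B|`
  have hsub : ∀ X ∈ F.memberSubfamily (m + 1), ∀ B ∈ (F.nonMemberSubfamily (m + 1)).filter
      (·.card = 3), X ⊆ B := fun X hX B hB => by
    obtain ⟨hXF, hmX⟩ := mem_memberSubfamily.1 hX
    obtain ⟨hB, hB3⟩ := mem_filter.1 hB
    obtain ⟨hBF, hmB⟩ := mem_nonMemberSubfamily.1 hB
    have h := hun _ hXF _ hBF
    rw [insert_union, card_insert_of_notMem (by simp [hmX, hmB])] at h
    exact union_eq_right.1 (eq_of_subset_of_card_le subset_union_right (by omega)).symm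
  have hinter : (B₁ ∩ B₂).card ≤ 2 := by
    have hc₁ := (mem_filter.1 hB₁).2
    have hc₂ := (mem_filter.1 hB₂).2
    have hlt : (B₁ ∩ B₂).card < B₁.card := card_lt_card <| Finset.ssubset_iff_subset_ne.2
      ⟨inter_subset_left, fun h => hne (eq_of_subset_of_card_le (inter_eq_left.1 h) (by omega))⟩
    omega
  calc (F.memberSubfamily (m + 1)).card ≤ (B₁ ∩ B₂).powerset.card :=
        card_le_card fun X hX =>
          mem_powerset.2 (subset_inter (hsub X hX B₁ hB₁) (hsub X hX B₂ hB₂))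
    _ = 2 ^ (B₁ ∩ B₂).card := card_powerset _
    _ ≤ 2 ^ 2 := Nat.pow_le_pow_right (by norm_num) hinter

end Link

section LinkBound

variable {m d : ℕ} {F : Finset (Finset ℕ)}

lemma card_memberSubfamily_add_card_nonTransversals_le (hpush : IsPushedDown d F)
    (hF : ∀ A ∈ F, A ⊆ Icc 1 (m + 1)) (hun : IsUnion (2 * d) F) (hd : 1 ≤ d)
    (hρ : ((F.memberSubfamily (m + 1)).filter (·.card = d)).card ≤ d) :
    (F.memberSubfamily (m + 1)).card + (nonTransversals (d - 1) (Icc 1 m)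
      ((F.nonMemberSubfamily (m + 1)).filter (·.card = d + 1))).card ≤
      ∑ i ∈ range d, m.choose i + ((F.memberSubfamily (m + 1)).filter (·.card = d)).card := by
  set layers := (range d).biUnion (powersetCard · (Icc 1 m))
  have hsub : F.memberSubfamily (m + 1) ∪ nonTransversals (d - 1) (Icc 1 m)
      ((F.nonMemberSubfamily (m + 1)).filter (·.card = d + 1)) ⊆
      layers ∪ (F.memberSubfamily (m + 1)).filter (·.card = d) := by
    intro S hS
    rcases mem_union.1 hS with hS | hS
    · have hSd : S.card ≤ d := by
        by_contra! h
        have := le_card_filter_memberSubfamily_of_isPushedDown hpush hS h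
        omega
      rcases hSd.lt_or_eq with h | h
      · exact mem_union_left _ (mem_biUnion.2 ⟨S.card, mem_range.2 h,
          mem_powersetCard.2 ⟨subset_Icc_of_mem_memberSubfamily hF hS, rfl⟩⟩)
      · exact mem_union_right _ (mem_filter.2 ⟨hS, h⟩)
    · exact mem_union_left _
        (mem_biUnion.2 ⟨d - 1, mem_range.2 (by omega), (mem_filter.1 hS).1⟩)
  have hlayers : layers.card ≤ ∑ i ∈ range d, m.choose i :=
    card_biUnion_le.trans (by simp [card_powersetCard])
  rw [← card_union_of_disjoint (disjoint_memberSubfamily_nonTransversals hun hd _)]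
  exact (card_le_card hsub).trans ((card_union_le _ _).trans (by omega))

lemma choose_add_card_filter_le_card_nonTransversals (hd : 3 ≤ d) (hm : 2 * d + 1 ≤ m)
    (hF : Admissible (m + 1) d F) (hshift : IsShifted F)
    (hρ : ((F.memberSubfamily (m + 1)).filter (·.card = d)).card ≤ d) :
    (m - d).choose (d - 1) + ((F.memberSubfamily (m + 1)).filter (·.card = d)).card ≤
      (nonTransversals (d - 1) (Icc 1 m)
        ((F.nonMemberSubfamily (m + 1)).filter (·.card = d + 1))).card + 1 := by
  by_cases hρ1 : ((F.memberSubfamily (m + 1)).filter (·.card = d)).card ≤ 1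
  · have := choose_le_card_nonTransversals (by omega) hm
      ((hshift.nonMemberSubfamily hF.subset_Icc).filter_card _)
      (fun B hB => subset_Icc_of_mem_nonMemberSubfamily hF.subset_Icc (mem_filter.1 hB).1)
      (fun B hB => (mem_filter.1 hB).2)
      (le_card_filter_nonMemberSubfamily hshift hF.subset_Icc (by omega) hF.le_card_filter)
    omega
  obtain ⟨S₁, hS₁, S₂, hS₂, hne⟩ := one_lt_card.1 (not_le.1 hρ1)
  obtain ⟨hS₁F, hS₁d⟩ := mem_filter.1 hS₁
  obtain ⟨hS₂F, hS₂d⟩ := mem_filter.1 hS₂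
  have hcone : ∀ S ∈ F.memberSubfamily (m + 1), S.card = d → ∀ x ∈ Icc 1 m \ S,
      insert x S ∈ (F.nonMemberSubfamily (m + 1)).filter (·.card = d + 1) := fun S hS hSd x hx =>
    have hx := mem_sdiff.1 hx
    mem_filter.2 ⟨insert_mem_nonMemberSubfamily hshift hS hx.1 hx.2,
      by rw [card_insert_of_notMem hx.2, hSd]⟩
  have h := choose_add_choose_le_card_nonTransversals (by omega) (by rw [Nat.card_Icc]; omega)
    (subset_Icc_of_mem_memberSubfamily hF.subset_Icc hS₁F)
    (subset_Icc_of_mem_memberSubfamily hF.subset_Icc hS₂F) hS₁d hS₂d hne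
    (hcone S₁ hS₁F hS₁d) (hcone S₂ hS₂F hS₂d)
  rw [Nat.card_Icc, Nat.add_sub_cancel] at h
  have := le_choose_of_pos_of_lt (M := m - d - 1) (k := d - 2) (by omega) (by omega)
  omega

lemma card_memberSubfamily_add_choose_le (hd : 2 ≤ d) (hm : 2 * d + 1 ≤ m)
    (hF : Admissible (m + 1) d F) (hshift : IsShifted F) (hpush : IsPushedDown d F)
    (ih : ∀ F', Admissible m (d - 1) F' → 2 ≤ d - 1 → F'.card ≤ extremalBound m (d - 1)) :
    (F.memberSubfamily (m + 1)).card + (m - d).choose (d - 1) ≤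
      ∑ i ∈ range d, m.choose i + 1 := by
  obtain rfl | hd3 : d = 2 ∨ 3 ≤ d := by omega
  · have := card_memberSubfamily_le_four hF.isUnion
      (le_card_filter_nonMemberSubfamily hshift hF.subset_Icc (by omega) hF.le_card_filter)
    have : (m - 2).choose (2 - 1) = m - 2 := Nat.choose_one_right _
    simp only [sum_range_succ, sum_range_zero, Nat.choose_zero_right, Nat.choose_one_right]
    omega
  by_cases hρ : d - 1 ≤ ((F.memberSubfamily (m + 1)).filter (·.card = d)).card
  · have hF₁ : Admissible m (d - 1) (F.memberSubfamily (m + 1)) :=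
      ⟨fun X hX => subset_Icc_of_mem_memberSubfamily hF.subset_Icc hX,
        isUnion_memberSubfamily hshift hF.isUnion (by omega),
        by rwa [Nat.sub_add_cancel (by omega)]⟩
    have := ih _ hF₁ (by omega)
    have := extremalBound_pred_add_choose_le hd3 hm
    omega
  · have := card_memberSubfamily_add_card_nonTransversals_le hpush hF.subset_Icc hF.isUnion
      (by omega) (by omega)
    have := choose_add_card_filter_le_card_nonTransversals hd3 hm hF hshift (by omega)
    omega

end LinkBound

namespace Admissible

variable {n m d : ℕ} {F : Finset (Finset ℕ)}

lemma card_le_of_isShifted (hd : 2 ≤ d) (hm : 2 * d + 1 ≤ m) (hF : Admissible (m + 1) d F)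
    (hshift : IsShifted F) (hpush : IsPushedDown d F)
    (ih : ∀ d' F', 2 ≤ d' → 2 * d' + 1 ≤ m → Admissible m d' F' →
      F'.card ≤ extremalBound m d') :
    F.card ≤ extremalBound (m + 1) d := by
  have hF₀ : Admissible m d (F.nonMemberSubfamily (m + 1)) :=
    ⟨fun X hX => subset_Icc_of_mem_nonMemberSubfamily hF.subset_Icc hX,
      fun A hA B hB =>
        hF.isUnion A (mem_nonMemberSubfamily.1 hA).1 B (mem_nonMemberSubfamily.1 hB).1,
      le_card_filter_nonMemberSubfamily hshift hF.subset_Icc (by omega) hF.le_card_filter⟩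
  have h₀ := ih d _ hd (by omega) hF₀
  have h₁ := card_memberSubfamily_add_choose_le hd hm hF hshift hpush
    fun F' hF' hd' => ih (d - 1) F' hd' (by omega) hF'
  have := extremalBound_succ (n := m) (d := d) (by omega) (by omega)
  rw [← card_memberSubfamily_add_card_nonMemberSubfamily (m + 1) F]
  omega

theorem card_le_extremalBound (hd : 2 ≤ d) (hn : 2 * d + 1 ≤ n) (hF : Admissible n d F) :
    F.card ≤ extremalBound n d := by
  induction n using Nat.strong_induction_on generalizing d F with
  | _ n ihn =>
  induction hw : weight F using Nat.strong_induction_on generalizing F with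
  | _ w ihw =>
  obtain rfl | ⟨m, rfl, hm⟩ : n = 2 * d + 1 ∨ ∃ m, n = m + 1 ∧ 2 * d + 1 ≤ m :=
    (eq_or_lt_of_le hn).imp Eq.symm fun h => ⟨n - 1, by omega, by omega⟩
  · exact hF.card_le_of_eq_two_mul_add_one
  by_cases hc : ∃ i j, 1 ≤ i ∧ i < j ∧ j ≤ m + 1 ∧ 𝓒 {i} {j} F ≠ F
  · obtain ⟨i, j, hi, hij, hjn, hne⟩ := hc
    rw [← UV.card_compression {i} {j} F]
    exact ihw _ (hw ▸ weight_compression_lt hij hne) (hF.compression hi hij hjn) rfl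
  push Not at hc
  by_cases hp : IsPushedDown d F
  · exact hF.card_le_of_isShifted hd hm (isShifted_of_compression_eq hF.subset_Icc hc) hp
      fun d' F' hd' hm' hF' => ihn m (by omega) hd' hm' hF'
  simp only [IsPushedDown, not_forall, exists_prop] at hp
  obtain ⟨A, hA, hAd, A', hA'A, hA'd, hA'F⟩ := hp
  have hA' : A' ⊂ A := ssubset_of_subset_of_ne hA'A (by rintro rfl; omega)
  have := ihw _ (hw ▸ weight_insert_erase_lt hA hA' hA'F) (hF.insert_erase hA hAd hA'A hA'd) rfl
  rwa [card_insert_of_notMem fun h => hA'F (mem_of_mem_erase h), card_erase_add_one hA] at this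

end Admissible

end UnionFamily

theorem stmt_15_general (n d r : ℕ) (hd : 2 ≤ d) (hn : 2 * d + 2 ≤ n)
    (hrd : d ≤ r)
    (F : Finset (Finset ℕ))
    (hF : ∀ A ∈ F, A ⊆ Finset.Icc 1 n)
    (hunion : ∀ A ∈ F, ∀ B ∈ F, (A ∪ B).card ≤ 2 * d)
    (hFd1 : r ≤ (F.filter (fun A => A.card = d + 1)).card) :
    F.card ≤ (∑ i ∈ Finset.range (d + 1), n.choose i) - (n - d).choose d + (n - d) :=
  UnionFamily.Admissible.card_le_extremalBound hd (by omega) ⟨hF, hunion, hrd.trans hFd1⟩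

theorem stmt_15 (n d r : ℕ) (hd : 2 ≤ d) (hn : 2 * d + 2 ≤ n)
    (hrd : d ≤ r) (hrn : r ≤ n - d)
    (F : Finset (Finset ℕ))
    (hF : ∀ A ∈ F, A ⊆ Finset.Icc 1 n)
    (hunion : ∀ A ∈ F, ∀ B ∈ F, (A ∪ B).card ≤ 2 * d)
    (hFd1 : r ≤ (F.filter (fun A => A.card = d + 1)).card) :
    F.card ≤ (∑ i ∈ Finset.range (d + 1), n.choose i) - (n - d).choose d + (n - d) :=
  stmt_15_general n d r hd hn hrd F hF hunion hFd1
end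

section
/- Let k ≥ 2, r ≥ 1, n ≥ 2k, and let F, G ⊆ binom([n], k) be cross-intersecting families with |G| ≥ |F| ≥ r and r ≤ k - 1. Then |F| + |G| ≤ C(n,k) - C(n-k+1,k) + C(n-k-r+1, k-r) + r. -/
/-
Let `𝒟` be the family of complements `[n] \ A`, `A ∈ F`, and `d = n - 2k`. A `k`-set lying
below a member `[n] \ A` of `𝒟` misses `A`, so it is not in `G`: hence
`|G| + |∂^d 𝒟| ≤ C(n, k)`. By Kruskal–Katona, `|∂^d 𝒟| ≥ T(m)`, the size of the `d`-th shadow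
of the first `m = |F|` sets of size `n - k` in colex order; for `m > C(n-1, k-1)` this already
contradicts `|F| ≤ |G|`. So `|F| + |G| ≤ C(n, k) - (T(m) - m)`, and it remains to show
`T(m) - m ≥ T(r) - r` for `r ≤ m ≤ C(n-1, k-1)`. This goes by induction on the ground set
`range ν` of the colex segment: for `m ≤ n - k + 1` both sides are explicit; beyond that the
segment splits into all `(n-k)`-subsets of `range ν` and `insert ν` of a shorter segment one
size down, whose shadow is at least as large as the segment itself by double counting.
-/

open Finset
open scoped FinsetFamily

theorem Nat.choose_add_le_choose_add {e y : ℕ} (he : 1 ≤ e) (hey : e ≤ y + 1) (j : ℕ) :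
    y.choose e + j ≤ (y + j).choose e := by
  obtain ⟨e, rfl⟩ : ∃ e', e = e' + 1 := ⟨e - 1, by omega⟩
  induction j with
  | zero => rfl
  | succ j ih =>
    rw [show y + (j + 1) = y + j + 1 by ring, Nat.choose_succ_succ']
    have := Nat.choose_pos (show e ≤ y + j by omega)
    omega

theorem Nat.choose_add_sub_le_choose {e x y : ℕ} (he : 1 ≤ e) (hex : e < x) (hyx : y ≤ x) :
    y.choose e + (x - y) ≤ x.choose e := by
  by_cases hey : e ≤ y + 1
  · simpa [Nat.add_sub_cancel' hyx] using Nat.choose_add_le_choose_add he hey (x - y)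
  · have := Nat.choose_add_le_choose_add he (y := e + 1) (by omega) (x - (e + 1))
    rw [Nat.choose_succ_self_right, Nat.add_sub_cancel' hex] at this
    rw [Nat.choose_eq_zero_of_lt (by omega)]
    omega

namespace Finset

section Shadow

variable {α : Type*} [DecidableEq α]

lemma shadow_map {β : Type*} [DecidableEq β] (f : α ↪ β) (𝒜 : Finset (Finset α)) :
    ∂ (𝒜.map (mapEmbedding f).toEmbedding) = (∂ 𝒜).map (mapEmbedding f).toEmbedding := by
  ext t
  simp only [mem_shadow_iff, mem_map, RelEmbedding.coe_toEmbedding, mapEmbedding_apply]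
  constructor
  · rintro ⟨_, ⟨s, hs, rfl⟩, b, hb, rfl⟩
    obtain ⟨a, ha, rfl⟩ := mem_map.1 hb
    exact ⟨s.erase a, ⟨s, hs, a, ha, rfl⟩, map_erase f s a⟩
  · rintro ⟨_, ⟨s, hs, a, ha, rfl⟩, rfl⟩
    exact ⟨s.map f, ⟨s, hs, rfl⟩, f a, mem_map_of_mem f ha, (map_erase f s a).symm⟩

lemma shadow_iterate_map {β : Type*} [DecidableEq β] (f : α ↪ β) (𝒜 : Finset (Finset α))
    (j : ℕ) :
    ∂^[j] (𝒜.map (mapEmbedding f).toEmbedding) = (∂^[j] 𝒜).map (mapEmbedding f).toEmbedding :=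
  (Function.Semiconj.iterate_right (f := (·.map (mapEmbedding f).toEmbedding))
    (fun 𝒜 ↦ (shadow_map f 𝒜).symm) j 𝒜).symm

variable {𝒜 : Finset (Finset α)} {s t U : Finset α} {F G : Finset (Finset α)} {b d k : ℕ}

lemma mem_shadow_iterate_iff_of_sized (h𝒜 : (𝒜 : Set (Finset α)).Sized (b + d)) :
    t ∈ ∂^[d] 𝒜 ↔ #t = b ∧ ∃ s ∈ 𝒜, t ⊆ s := by
  rw [mem_shadow_iterate_iff_exists_mem_card_add]
  constructor
  · rintro ⟨s, hs, hts, hcard⟩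
    exact ⟨by have := h𝒜 hs; omega, s, hs, hts⟩
  · rintro ⟨rfl, s, hs, hts⟩
    exact ⟨s, hs, hts, h𝒜 hs⟩

lemma shadow_iterate_powersetCard (h : b + d ≤ #s) :
    ∂^[d] (s.powersetCard (b + d)) = s.powersetCard b := by
  ext t
  rw [mem_shadow_iterate_iff_of_sized (fun _ hu ↦ (mem_powersetCard.1 hu).2), mem_powersetCard]
  constructor
  · rintro ⟨ht, u, hu, htu⟩
    exact ⟨htu.trans (mem_powersetCard.1 hu).1, ht⟩
  · rintro ⟨hts, ht⟩
    obtain ⟨u, htu, hus, hu⟩ := exists_subsuperset_card_eq hts (by omega) h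
    exact ⟨ht, u, mem_powersetCard.2 ⟨hus, hu⟩, htu⟩

/-- Double counting the pairs `t ⊆ u` with `u ∈ 𝒜`, `t ∈ ∂^[d] 𝒜`: each `u` contains
`(b + d).choose b` such `t`, and each `t` lies in at most `(#s - b).choose d ≤ (b + d).choose d`
members of `𝒜`. -/
lemma card_le_card_shadow_iterate (h𝒜 : ∀ u ∈ 𝒜, u ⊆ s ∧ #u = b + d) (hs : #s ≤ 2 * b + d) :
    #𝒜 ≤ #(∂^[d] 𝒜) := by
  have h𝒜' : (𝒜 : Set (Finset α)).Sized (b + d) := fun u hu ↦ (h𝒜 u hu).2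
  refine le_of_mul_le_mul_right (card_mul_le_card_mul (· ⊇ ·) (m := (b + d).choose b)
    (n := (b + d).choose b) (fun u hu ↦ ?_) (fun t ht ↦ ?_)) (Nat.choose_pos (by omega))
  · have : (∂^[d] 𝒜).bipartiteAbove (· ⊇ ·) u = u.powersetCard b := by
      ext t
      rw [mem_bipartiteAbove, mem_shadow_iterate_iff_of_sized h𝒜', mem_powersetCard]
      exact ⟨fun ⟨⟨ht, _⟩, htu⟩ ↦ ⟨htu, ht⟩, fun ⟨htu, ht⟩ ↦ ⟨⟨ht, u, hu, htu⟩, htu⟩⟩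
    rw [this, card_powersetCard, (h𝒜 u hu).2]
  · obtain ⟨htb, u, hu, htu⟩ := (mem_shadow_iterate_iff_of_sized h𝒜').1 ht
    have hts : t ⊆ s := htu.trans (h𝒜 u hu).1
    calc #(𝒜.bipartiteBelow (· ⊇ ·) t)
        ≤ #((s \ t).powersetCard d) := by
          refine card_le_card_of_injOn (· \ t) (fun v hv ↦ ?_) (fun v hv w hw hvw ↦ ?_)
          · obtain ⟨hv𝒜, htv⟩ := (mem_bipartiteBelow _).1 hv
            refine mem_powersetCard.2 ⟨sdiff_subset_sdiff (h𝒜 v hv𝒜).1 subset_rfl, ?_⟩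
            rw [card_sdiff_of_subset htv, (h𝒜 v hv𝒜).2, htb, Nat.add_sub_cancel_left]
          · rw [← sdiff_union_of_subset ((mem_bipartiteBelow _).1 hv).2,
              ← sdiff_union_of_subset ((mem_bipartiteBelow _).1 hw).2]
            exact congrArg (· ∪ t) hvw
      _ = (#s - b).choose d := by rw [card_powersetCard, card_sdiff_of_subset hts, htb]
      _ ≤ (b + d).choose d := Nat.choose_le_choose d (by omega)
      _ = (b + d).choose b := Nat.choose_symm_add.symm

lemma card_powersetCard_union_image_insert {x : α} {𝒮 : Finset (Finset α)} (hx : x ∉ U)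
    (h𝒮 : ∀ s ∈ 𝒮, s ⊆ U) (c : ℕ) :
    #(U.powersetCard c ∪ 𝒮.image (insert x)) = (#U).choose c + #𝒮 := by
  have hx𝒮 : ∀ s ∈ 𝒮, x ∉ s := fun s hs hxs ↦ hx (h𝒮 s hs hxs)
  rw [card_union_of_disjoint, card_powersetCard, card_image_of_injOn]
  · intro s hs t ht hst
    rw [← erase_insert (hx𝒮 s hs), ← erase_insert (hx𝒮 t ht)]
    exact congrArg (·.erase x) hst
  · simp only [disjoint_right, mem_image, mem_powersetCard]
    rintro _ ⟨s, -, rfl⟩ ⟨hsU, -⟩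
    exact hx (hsU (mem_insert_self x s))

lemma sized_image_sdiff (hF : F ⊆ U.powersetCard k) :
    (F.image (U \ ·) : Set (Finset α)).Sized (#U - k) := by
  rintro _ hD
  obtain ⟨A, hA, rfl⟩ := mem_image.1 hD
  obtain ⟨hAU, hAk⟩ := mem_powersetCard.1 (hF hA)
  rw [card_sdiff_of_subset hAU, hAk]

lemma card_image_sdiff (hF : ∀ A ∈ F, A ⊆ U) : #(F.image (U \ ·)) = #F :=
  card_image_of_injOn fun A hA B hB hAB ↦ by
    rw [← sdiff_sdiff_eq_self (hF A hA), ← sdiff_sdiff_eq_self (hF B hB)]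
    exact congrArg (U \ ·) hAB

lemma disjoint_shadow_iterate_image_sdiff (hcross : ∀ A ∈ F, ∀ B ∈ G, (A ∩ B).Nonempty)
    (j : ℕ) : Disjoint G (∂^[j] (F.image (U \ ·))) := by
  refine disjoint_left.2 fun B hB hBsh ↦ ?_
  obtain ⟨_, hD, hBD, -⟩ := mem_shadow_iterate_iff_exists_sdiff.1 hBsh
  obtain ⟨A, hA, rfl⟩ := mem_image.1 hD
  obtain ⟨x, hx⟩ := hcross A hA B hB
  exact (mem_sdiff.1 (hBD (mem_inter.1 hx).2)).2 (mem_inter.1 hx).1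

lemma card_add_card_shadow_iterate_image_sdiff_le (hU : #U = 2 * k + d)
    (hF : F ⊆ U.powersetCard k) (hG : G ⊆ U.powersetCard k)
    (hcross : ∀ A ∈ F, ∀ B ∈ G, (A ∩ B).Nonempty) :
    #G + #(∂^[d] (F.image (U \ ·))) ≤ (#U).choose k := by
  have hsized : (F.image (U \ ·) : Set (Finset α)).Sized (k + d) := by
    convert sized_image_sdiff hF using 1; omega
  have hsh : ∂^[d] (F.image (U \ ·)) ⊆ U.powersetCard k := fun t ht ↦ by
    obtain ⟨htk, _, hD, htD⟩ := (mem_shadow_iterate_iff_of_sized hsized).1 ht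
    obtain ⟨A, -, rfl⟩ := mem_image.1 hD
    exact mem_powersetCard.2 ⟨htD.trans sdiff_subset, htk⟩
  rw [← card_union_of_disjoint (disjoint_shadow_iterate_image_sdiff hcross d), ← card_powersetCard]
  exact card_le_card (union_subset hG hsh)

end Shadow

theorem iterated_kk_nat {𝒜 𝒞 : Finset (Finset ℕ)} {r : ℕ} (h𝒜 : (𝒜 : Set (Finset ℕ)).Sized r)
    (h𝒞𝒜 : #𝒞 ≤ #𝒜) (h𝒞 : Colex.IsInitSeg 𝒞 r) (j : ℕ) : #(∂^[j] 𝒞) ≤ #(∂^[j] 𝒜) := by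
  obtain ⟨N, hN⟩ := ((𝒜 ∪ 𝒞).sup id).exists_nat_subset_range
  let φ := (mapEmbedding (Fin.valEmbedding (n := N))).toEmbedding
  let pullback (ℬ : Finset (Finset ℕ)) : Finset (Finset (Fin N)) := {s | φ s ∈ ℬ}
  have map_pullback {ℬ} (hℬ : ℬ ⊆ 𝒜 ∪ 𝒞) : (pullback ℬ).map φ = ℬ := by
    ext s
    simp only [mem_map, pullback, mem_filter_univ]
    refine ⟨fun ⟨t, ht, hts⟩ ↦ hts ▸ ht, fun hs ↦ ?_⟩
    have hsN : ∀ m ∈ s, m < N := fun m hm ↦ mem_range.1 <| hN <| mem_sup.2 ⟨s, hℬ hs, hm⟩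
    exact ⟨s.attachFin hsN, by simpa [φ, map_valEmbedding_attachFin] using hs,
      map_valEmbedding_attachFin hsN⟩
  have card_shadow {ℬ} (hℬ : ℬ ⊆ 𝒜 ∪ 𝒞) : #(∂^[j] ℬ) = #(∂^[j] (pullback ℬ)) := by
    rw [← map_pullback hℬ, shadow_iterate_map, card_map, map_pullback hℬ]
  rw [card_shadow subset_union_right, card_shadow subset_union_left]
  refine iterated_kk (r := r) (fun s hs ↦ ?_) ?_ ⟨fun s hs ↦ ?_, fun s t hs ⟨hts, ht⟩ ↦ ?_⟩
  · simpa [φ] using h𝒜 (mem_filter.1 hs).2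
  · rwa [← card_map φ, ← card_map φ, map_pullback subset_union_left,
      map_pullback subset_union_right]
  · simpa [φ] using h𝒞.1 (mem_filter.1 hs).2
  · refine mem_filter.2 ⟨mem_univ _, h𝒞.2 (mem_filter.1 hs).2 ⟨?_, by simpa [φ] using ht⟩⟩
    simpa [φ, map_eq_image] using
      (Colex.toColex_image_lt_toColex_image Fin.val_strictMono).2 hts

/-- The first `m` members of `(range ν).powersetCard a` in colex order (all of them if
`ν.choose a ≤ m`). In colex the `a`-subsets of `range (ν + 1)` avoiding `ν` precede those
containing it, which gives the recursion. -/
def colexSeg : ℕ → ℕ → ℕ → Finset (Finset ℕ)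
  | 0, _, m => if m = 0 then ∅ else {∅}
  | _ + 1, 0, _ => ∅
  | a + 1, ν + 1, m =>
    if m ≤ ν.choose (a + 1) then colexSeg (a + 1) ν m
    else (range ν).powersetCard (a + 1) ∪ (colexSeg a ν (m - ν.choose (a + 1))).image (insert ν)

lemma colexSeg_succ_of_le {a ν m : ℕ} (h : m ≤ ν.choose (a + 1)) :
    colexSeg (a + 1) (ν + 1) m = colexSeg (a + 1) ν m := if_pos h

lemma colexSeg_succ_of_lt {a ν m : ℕ} (h : ν.choose (a + 1) < m) :
    colexSeg (a + 1) (ν + 1) m =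
      (range ν).powersetCard (a + 1) ∪ (colexSeg a ν (m - ν.choose (a + 1))).image (insert ν) :=
  if_neg h.not_ge

lemma colexSeg_subset_powersetCard (a ν m : ℕ) : colexSeg a ν m ⊆ (range ν).powersetCard a := by
  have hν (ν) : range ν ⊆ range (ν + 1) := range_subset_range.2 ν.le_succ
  induction a, ν, m using colexSeg.induct with
  | case1 | case3 => simp [colexSeg]
  | case2 ν m hm => simp [colexSeg, hm]
  | case4 a ν m h ih =>
    rw [colexSeg_succ_of_le h]
    exact ih.trans (powersetCard_mono (hν ν))
  | case5 a ν m h ih =>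
    rw [colexSeg_succ_of_lt (not_le.1 h)]
    refine union_subset (powersetCard_mono (hν ν)) fun _ ht ↦ ?_
    obtain ⟨s, hs, rfl⟩ := mem_image.1 ht
    obtain ⟨hsν, hcard⟩ := mem_powersetCard.1 (ih hs)
    refine mem_powersetCard.2 ⟨insert_subset (by simp) (hsν.trans (hν ν)), ?_⟩
    rw [card_insert_of_notMem fun h ↦ by simpa using hsν h, hcard]

lemma card_colexSeg (a ν m : ℕ) : #(colexSeg a ν m) = min m (ν.choose a) := by
  induction a, ν, m using colexSeg.induct with
  | case1 | case3 => simp [colexSeg]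
  | case2 ν m hm => simp [colexSeg, hm]; omega
  | case4 a ν m h ih =>
    rw [colexSeg_succ_of_le h, ih, min_eq_left h, min_eq_left (h.trans (Nat.choose_le_succ _ _))]
  | case5 a ν m h ih =>
    rw [colexSeg_succ_of_lt (not_le.1 h), card_powersetCard_union_image_insert (by simp)
      (fun s hs ↦ (mem_powersetCard.1 (colexSeg_subset_powersetCard _ _ _ hs)).1), card_range, ih,
      Nat.choose_succ_succ']
    omega

lemma sized_colexSeg (a ν m : ℕ) : (colexSeg a ν m : Set (Finset ℕ)).Sized a := fun _ hs ↦
  (mem_powersetCard.1 (colexSeg_subset_powersetCard a ν m hs)).2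

lemma isInitSeg_colexSeg (a ν m : ℕ) : Colex.IsInitSeg (colexSeg a ν m) a := by
  induction a, ν, m using colexSeg.induct with
  | case1 | case3 => simp [colexSeg]
  | case2 ν m hm =>
    refine ⟨sized_colexSeg _ _ _, fun s t hs hts ↦ ?_⟩
    simp only [colexSeg, hm, if_false, mem_singleton] at hs
    subst hs
    exact absurd hts.1 (by simp)
  | case4 a ν m h ih => rwa [colexSeg_succ_of_le h]
  | case5 a ν m h ih =>
    refine ⟨sized_colexSeg _ _ _, fun s t hs ⟨hts, htcard⟩ ↦ ?_⟩
    have htν : ∀ x ∈ t, x < ν + 1 := Colex.forall_lt_mono hts.le fun x hx ↦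
      mem_range.1 ((mem_powersetCard.1 (colexSeg_subset_powersetCard _ _ _ hs)).1 hx)
    rw [colexSeg_succ_of_lt (not_le.1 h)] at hs ⊢
    by_cases hνt : ν ∈ t
    · obtain hs | hs := mem_union.1 hs
      · have hsν : ∀ x ∈ s, x < ν := fun x hx ↦ mem_range.1 ((mem_powersetCard.1 hs).1 hx)
        exact absurd (Colex.forall_lt_mono hts.le hsν ν hνt) (lt_irrefl ν)
      obtain ⟨u, hu, rfl⟩ := mem_image.1 hs
      have hνu : ν ∉ u := fun h ↦ by
        simpa using (mem_powersetCard.1 (colexSeg_subset_powersetCard _ _ _ hu)).1 h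
      refine mem_union_right _ (mem_image.2 ⟨t.erase ν, ih.2 hu ⟨?_, ?_⟩, insert_erase hνt⟩)
      · have := (Colex.toColex_sdiff_lt_toColex_sdiff (singleton_subset_iff.2 hνt)
          (singleton_subset_iff.2 (mem_insert_self ν u))).2 hts
        rwa [sdiff_singleton_eq_erase, sdiff_singleton_eq_erase, erase_insert hνu] at this
      · rw [card_erase_of_mem hνt, htcard, Nat.succ_sub_one]
    · refine mem_union_left _ (mem_powersetCard.2 ⟨fun x hx ↦ mem_range.2 ?_, htcard⟩)
      exact (Nat.lt_succ_iff.1 (htν x hx)).lt_of_ne (ne_of_mem_of_not_mem hx hνt)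

lemma colexSeg_of_choose_le {a ν m : ℕ} (h : ν.choose a ≤ m) :
    colexSeg a ν m = (range ν).powersetCard a :=
  eq_of_subset_of_card_le (colexSeg_subset_powersetCard a ν m) <| by
    rw [card_colexSeg, card_powersetCard, card_range, min_eq_right h]

lemma shadow_iterate_colexSeg_succ_of_lt {b d ν m : ℕ} (hν : b + d + 1 ≤ ν)
    (h : ν.choose (b + d + 1) < m) :
    ∂^[d] (colexSeg (b + d + 1) (ν + 1) m) = (range ν).powersetCard (b + 1) ∪
      (∂^[d] (colexSeg (b + d) ν (m - ν.choose (b + d + 1)))).image (insert ν) := by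
  set 𝒮 := colexSeg (b + d) ν (m - ν.choose (b + d + 1))
  have h𝒮 : ∀ u ∈ 𝒮, u ⊆ range ν := fun u hu ↦
    (mem_powersetCard.1 (colexSeg_subset_powersetCard _ _ _ hu)).1
  have hsized : (colexSeg (b + d + 1) (ν + 1) m : Set (Finset ℕ)).Sized (b + 1 + d) := by
    rw [Nat.add_right_comm]; exact sized_colexSeg _ _ _
  ext t
  rw [mem_shadow_iterate_iff_of_sized hsized, colexSeg_succ_of_lt h, mem_union, mem_image,
    mem_powersetCard]
  constructor
  · rintro ⟨htb, s, hs, hts⟩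
    obtain hs | hs := mem_union.1 hs
    · exact .inl ⟨hts.trans (mem_powersetCard.1 hs).1, htb⟩
    obtain ⟨w, hw, rfl⟩ := mem_image.1 hs
    by_cases hνt : ν ∈ t
    · refine .inr ⟨t.erase ν, (mem_shadow_iterate_iff_of_sized (sized_colexSeg _ _ _)).2
        ⟨by rw [card_erase_of_mem hνt, htb, Nat.add_sub_cancel], w, hw, ?_⟩, insert_erase hνt⟩
      rw [← erase_insert (a := ν) (s := w) (fun h ↦ by simpa using h𝒮 w hw h)]
      exact erase_subset_erase ν hts
    · exact .inl ⟨fun x hx ↦ h𝒮 w hw <| (mem_insert.1 (hts hx)).resolve_left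
        (ne_of_mem_of_not_mem hx hνt), htb⟩
  · rintro (⟨htν, htb⟩ | ⟨u, hu, rfl⟩)
    · obtain ⟨s, hts, hsν, hs⟩ := exists_subsuperset_card_eq htν (by omega)
        (by rwa [card_range] : b + d + 1 ≤ #(range ν))
      exact ⟨htb, s, mem_union_left _ (mem_powersetCard.2 ⟨hsν, hs⟩), hts⟩
    obtain ⟨hub, w, hw, huw⟩ := (mem_shadow_iterate_iff_of_sized (sized_colexSeg _ _ _)).1 hu
    refine ⟨?_, insert ν w, mem_union_right _ (mem_image_of_mem _ hw), insert_subset_insert ν huw⟩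
    rw [card_insert_of_notMem (fun h ↦ by simpa using h𝒮 w hw (huw h)), hub]

lemma card_shadow_iterate_colexSeg_succ_of_lt {b d ν m : ℕ} (hν : b + d + 1 ≤ ν)
    (h : ν.choose (b + d + 1) < m) :
    #(∂^[d] (colexSeg (b + d + 1) (ν + 1) m)) =
      ν.choose (b + 1) + #(∂^[d] (colexSeg (b + d) ν (m - ν.choose (b + d + 1)))) := by
  rw [shadow_iterate_colexSeg_succ_of_lt hν h, card_powersetCard_union_image_insert (by simp)
    (fun u hu ↦ ?_), card_range]
  obtain ⟨-, w, hw, huw⟩ := (mem_shadow_iterate_iff_of_sized (sized_colexSeg _ _ _)).1 hu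
  exact huw.trans (mem_powersetCard.1 (colexSeg_subset_powersetCard _ _ _ hw)).1

lemma colexSeg_zero_right (a ν : ℕ) : colexSeg a ν 0 = ∅ := by
  simpa using card_colexSeg a ν 0

/-- The `b`-subsets of `range (b + d + 1)` missed by the shadow are those containing the last `m`
elements; there are `(b + d + 1 - m).choose (b - m)` of them for `m ≤ b`, and none for `m > b`.
Written as `(b + d + 1 - m).choose (d + 1)` this count needs no case split. -/
lemma card_shadow_iterate_colexSeg_of_le_succ (b d : ℕ) {m : ℕ} (hm : m ≤ b + d + 1) :
    #(∂^[d] (colexSeg (b + d) (b + d + 1) m)) + (b + d + 1 - m).choose (d + 1) =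
      (b + d + 1).choose b := by
  rcases m.eq_zero_or_pos with rfl | hm0
  · rw [colexSeg_zero_right, shadow_iterate_empty, card_empty, Nat.sub_zero, zero_add,
      Nat.choose_symm_of_eq_add (by ring)]
  induction b generalizing m with
  | zero =>
    simp only [Nat.zero_add] at hm ⊢
    obtain ⟨s, hs⟩ : (colexSeg d (d + 1) m).Nonempty := by
      rw [← card_pos, card_colexSeg, Nat.choose_succ_self_right]; omega
    have : ∂^[d] (colexSeg d (d + 1) m) = {∅} := by
      ext t
      rw [mem_shadow_iterate_iff_of_sized (b := 0) (by simpa using sized_colexSeg d (d + 1) m),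
        card_eq_zero, mem_singleton]
      exact ⟨And.left, fun ht ↦ ⟨ht, s, hs, ht ▸ empty_subset s⟩⟩
    rw [this, card_singleton, Nat.choose_eq_zero_of_lt (by omega), Nat.choose_zero_right]
  | succ b ih =>
    rw [Nat.add_right_comm b 1 d] at hm ⊢
    rcases (show m = 1 ∨ 1 < m by omega) with rfl | hm1
    · rw [colexSeg_succ_of_le (by simp), colexSeg_of_choose_le (by simp), Nat.add_right_comm,
        shadow_iterate_powersetCard (by simp), card_powersetCard, card_range, Nat.add_sub_cancel,
        Nat.choose_symm_of_eq_add (show b + 1 + d = d + 1 + b by ring),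
        Nat.choose_succ_succ', add_comm]
    · rw [card_shadow_iterate_colexSeg_succ_of_lt le_rfl (by simpa using hm1), Nat.choose_self]
      have := ih (m := m - 1) (by omega) (by omega)
      rw [show b + d + 1 + 1 - m = b + d + 1 - (m - 1) by omega,
        Nat.choose_succ_succ' (b + d + 1) b]
      omega

theorem le_card_shadow_iterate_colexSeg {b d r ν m : ℕ} (hrb : r < b) (hν : b + d + 1 ≤ ν)
    (hνb : ν ≤ 2 * b + d - 1) (hrm : r ≤ m) (hm : m ≤ ν.choose (b + d)) :
    (b + d + 1).choose b + (m - r) ≤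
      #(∂^[d] (colexSeg (b + d) ν m)) + (b + d + 1 - r).choose (d + 1) := by
  induction ν, hν using Nat.le_induction generalizing m with
  | base =>
    rw [Nat.choose_succ_self_right] at hm
    have := card_shadow_iterate_colexSeg_of_le_succ b d hm
    have := Nat.choose_add_sub_le_choose (e := d + 1) (x := b + d + 1 - r) (y := b + d + 1 - m)
      (by omega) (by omega) (by omega)
    omega
  | succ ν hν ih =>
    obtain ⟨b, rfl⟩ : ∃ b', b = b' + 1 := ⟨b - 1, by omega⟩
    rw [show b + 1 + d = b + d + 1 by ring] at hm hν ih ⊢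
    rcases le_or_gt m (ν.choose (b + d + 1)) with h | h
    · rw [colexSeg_succ_of_le h]
      exact ih (by omega) hrm h
    rw [card_shadow_iterate_colexSeg_succ_of_lt (b := b) (by omega) h]
    have hfull := ih (m := ν.choose (b + d + 1)) (by omega) ?_ le_rfl
    · have hT : #(∂^[d] (colexSeg (b + d + 1) ν (ν.choose (b + d + 1)))) = ν.choose (b + 1) := by
        rw [colexSeg_of_choose_le le_rfl, show b + d + 1 = b + 1 + d by ring,
          shadow_iterate_powersetCard (by rw [card_range]; omega), card_powersetCard, card_range]
      have hpascal := Nat.choose_succ_succ' ν (b + d)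
      have hlym := card_le_card_shadow_iterate (s := range ν) (b := b) (d := d)
        (𝒜 := colexSeg (b + d) ν (m - ν.choose (b + d + 1)))
        (fun u hu ↦ mem_powersetCard.1 (colexSeg_subset_powersetCard _ _ _ hu))
        (by rw [card_range]; omega)
      rw [card_colexSeg, min_eq_left (by omega)] at hlym
      omega
    calc r ≤ b + d + 1 + 1 := by omega
      _ = (b + d + 1 + 1).choose (b + d + 1) := (Nat.choose_succ_self_right _).symm
      _ ≤ ν.choose (b + d + 1) := Nat.choose_le_choose _ hν

variable {U : Finset ℕ} {F G : Finset (Finset ℕ)} {k d : ℕ}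

lemma card_add_card_shadow_iterate_colexSeg_le (hU : #U = 2 * k + d) (hF : F ⊆ U.powersetCard k)
    (hG : G ⊆ U.powersetCard k) (hcross : ∀ A ∈ F, ∀ B ∈ G, (A ∩ B).Nonempty) (ν : ℕ) :
    #G + #(∂^[d] (colexSeg (k + d) ν #F)) ≤ (#U).choose k := by
  have hsized : (F.image (U \ ·) : Set (Finset ℕ)).Sized (k + d) := by
    convert sized_image_sdiff hF using 1; omega
  have hkk := iterated_kk_nat hsized (𝒞 := colexSeg (k + d) ν #F) (by
      rw [card_colexSeg, card_image_sdiff fun A hA ↦ (mem_powersetCard.1 (hF hA)).1]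
      exact min_le_left _ _) (isInitSeg_colexSeg _ _ _) d
  have := card_add_card_shadow_iterate_image_sdiff_le hU hF hG hcross
  omega

lemma card_le_choose_of_crossIntersecting (hk : 1 ≤ k) (hU : #U = 2 * k + d)
    (hF : F ⊆ U.powersetCard k) (hG : G ⊆ U.powersetCard k)
    (hcross : ∀ A ∈ F, ∀ B ∈ G, (A ∩ B).Nonempty) (hFG : #F ≤ #G) :
    #F ≤ (#U - 1).choose (k + d) := by
  by_contra! h
  have := card_add_card_shadow_iterate_colexSeg_le hU hF hG hcross (#U - 1)
  rw [colexSeg_of_choose_le h.le, shadow_iterate_powersetCard (by simp; omega),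
    card_powersetCard, card_range] at this
  rw [Nat.choose_symm_of_eq_add (show #U - 1 = k + d + (k - 1) by omega)] at h
  have hpascal := Nat.choose_succ_succ' (#U - 1) (k - 1)
  rw [Nat.sub_add_cancel (by omega), Nat.sub_add_cancel hk] at hpascal
  omega

end Finset

theorem stmt_18_general (n k r : ℕ) (hk : 2 ≤ k) (hrk : r ≤ k - 1)
    (hn : 2 * k ≤ n)
    (F G : Finset (Finset ℕ))
    (hF : F ⊆ (Finset.Icc 1 n).powersetCard k)
    (hG : G ⊆ (Finset.Icc 1 n).powersetCard k)
    (hFr : r ≤ F.card) (hGF : F.card ≤ G.card)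
    (hcross : ∀ A ∈ F, ∀ B ∈ G, (A ∩ B).Nonempty) :
    F.card + G.card ≤
      n.choose k - (n - k + 1).choose k + (n - k - r + 1).choose (k - r) + r := by
  obtain ⟨d, hd⟩ : ∃ d, n = 2 * k + d := ⟨n - 2 * k, by omega⟩
  have hU : #(Icc 1 n) = 2 * k + d := by simp [hd]
  have hcount := card_add_card_shadow_iterate_colexSeg_le hU hF hG hcross (n - 1)
  have hfeas := card_le_choose_of_crossIntersecting (by omega) hU hF hG hcross hGF
  rw [Nat.card_Icc, Nat.add_sub_cancel] at hcount hfeas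
  have hmain := le_card_shadow_iterate_colexSeg (b := k) (by omega) (by omega) (by omega) hFr hfeas
  have hsymm : (k + d + 1 - r).choose (d + 1) = (k + d + 1 - r).choose (k - r) :=
    Nat.choose_symm_of_eq_add (by omega)
  have hmono : (k + d + 1).choose k ≤ n.choose k := Nat.choose_le_choose k (by omega)
  rw [show n - k + 1 = k + d + 1 by omega, show n - k - r + 1 = k + d + 1 - r by omega]
  omega

theorem stmt_18 (n k r : ℕ) (hk : 2 ≤ k) (hr1 : 1 ≤ r) (hrk : r ≤ k - 1)
    (hn : 2 * k ≤ n)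
    (F G : Finset (Finset ℕ))
    (hF : F ⊆ (Finset.Icc 1 n).powersetCard k)
    (hG : G ⊆ (Finset.Icc 1 n).powersetCard k)
    (hFr : r ≤ F.card) (hGF : F.card ≤ G.card)
    (hcross : ∀ A ∈ F, ∀ B ∈ G, (A ∩ B).Nonempty) :
    F.card + G.card ≤
      n.choose k - (n - k + 1).choose k + (n - k - r + 1).choose (k - r) + r :=
  stmt_18_general n k r hk hrk hn F G hF hG hFr hGF hcross
end
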